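/- Let ε = 1 or ε = -1, let b₁, b₀, c₂, c₁ : ℝ → ℝ be smooth, and let η₁, η₂ : ℝ → ℝ be smooth. Then the Lie bracket of the vector fields Y(η₁) and Y(η₂) on ℝ⁴ equals X(ξ), where ξ(t) := −(ε/2)(η₁(t) η₂'(t) − η₁'(t) η₂(t)). In particular the symmetry algebra spanned by the X(ξ) and Y(η) is non-Abelian. -/

import Mathlib

/-!
Each `Y(η)` has the form `a(t) y ∂x + e(t) ∂y + (b(t) y + c(t)) ∂u`. Such fields have no
`∂t`-component and are affine in `y`, so the bracket of two of them is the constant-in-`y` field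
`(a₂ e₁ - a₁ e₂) ∂x + (b₂ e₁ - b₁ e₂) ∂u`. For `Y(η₁)`, `Y(η₂)` the `b₁`- and `c₂`-terms cancel
and what remains is `-(ε/2)` times the Wronskian `η₁ η₂' - η₁' η₂` and its derivative
`η₁ η₂'' - η₁'' η₂`, i.e. `X(ξ)`.
-/

/-- Lie bracket of vector fields on `ℝ⁴`, identified with smooth maps `ℝ⁴ → ℝ⁴`:
`[V,W](p) = DW(p)(V(p)) − DV(p)(W(p))`. -/
noncomputable def VBracket (V W : ℝ × ℝ × ℝ × ℝ → ℝ × ℝ × ℝ × ℝ) :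
    ℝ × ℝ × ℝ × ℝ → ℝ × ℝ × ℝ × ℝ :=
  fun p => fderiv ℝ W p (V p) - fderiv ℝ V p (W p)

/-- The vector field `X(ξ) = ξ(t)∂x + ξ'(t)∂u` in coordinates `(x,y,t,u)`. -/
noncomputable def Xfield (ξ : ℝ → ℝ) : ℝ × ℝ × ℝ × ℝ → ℝ × ℝ × ℝ × ℝ :=
  fun p => (ξ p.2.2.1, 0, 0, deriv ξ p.2.2.1)

/-- The vector field `Y(η)` of Theorem 2 in coordinates `(x,y,t,u)`. -/
noncomputable def Yfield (ε : ℝ) (b₁ b₀ c₂ c₁ : ℝ → ℝ) (η : ℝ → ℝ) :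
    ℝ × ℝ × ℝ × ℝ → ℝ × ℝ × ℝ × ℝ :=
  fun p =>
    (ε / 2 * (b₁ p.2.2.1 * η p.2.2.1 - deriv η p.2.2.1) * p.2.1,
     η p.2.2.1,
     0,
     (-2 * c₂ p.2.2.1 * η p.2.2.1
        + ε / 2 * (deriv b₁ p.2.2.1 * η p.2.2.1 + (b₁ p.2.2.1) ^ 2 * η p.2.2.1
            - deriv (deriv η) p.2.2.1)) * p.2.1
       - c₁ p.2.2.1 * η p.2.2.1
       + ε / 2 * b₀ p.2.2.1 * (b₁ p.2.2.1 * η p.2.2.1 - deriv η p.2.2.1))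

def yAffineField (a e b c : ℝ → ℝ) : ℝ × ℝ × ℝ × ℝ → ℝ × ℝ × ℝ × ℝ :=
  fun p => (a p.2.2.1 * p.2.1, e p.2.2.1, 0, b p.2.2.1 * p.2.1 + c p.2.2.1)

section yAffineField

variable {a e b c : ℝ → ℝ}

lemma differentiable_yAffineField (ha : Differentiable ℝ a) (he : Differentiable ℝ e)
    (hb : Differentiable ℝ b) (hc : Differentiable ℝ c) :
    Differentiable ℝ (yAffineField a e b c) := by
  unfold yAffineField
  fun_prop

lemma fderiv_yAffineField_apply (ha : Differentiable ℝ a) (he : Differentiable ℝ e)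
    (hb : Differentiable ℝ b) (hc : Differentiable ℝ c) (p v : ℝ × ℝ × ℝ × ℝ)
    (hv : v.2.2.1 = 0) :
    fderiv ℝ (yAffineField a e b c) p v
      = (a p.2.2.1 * v.2.1, 0, 0, b p.2.2.1 * v.2.1) := by
  rw [← (differentiable_yAffineField ha he hb hc p).lineDeriv_eq_fderiv, lineDeriv]
  obtain ⟨x, y, t, u⟩ := p
  have hline : (fun s : ℝ => yAffineField a e b c ((x, y, t, u) + s • v))
      = fun s => (a t * (y + s * v.2.1), e t, 0, b t * (y + s * v.2.1) + c t) := by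
    funext s
    simp [yAffineField, hv]
  have hy : HasDerivAt (fun s : ℝ => y + s * v.2.1) v.2.1 0 := by
    simpa using ((hasDerivAt_id (0 : ℝ)).mul_const v.2.1).const_add y
  rw [hline]
  exact ((hy.const_mul (a t)).prodMk ((hasDerivAt_const _ (e t)).prodMk
    ((hasDerivAt_const _ 0).prodMk ((hy.const_mul (b t)).add_const (c t))))).deriv

variable {a' e' b' c' : ℝ → ℝ}

lemma vBracket_yAffineField (ha : Differentiable ℝ a) (he : Differentiable ℝ e)
    (hb : Differentiable ℝ b) (hc : Differentiable ℝ c) (ha' : Differentiable ℝ a')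
    (he' : Differentiable ℝ e') (hb' : Differentiable ℝ b') (hc' : Differentiable ℝ c')
    (p : ℝ × ℝ × ℝ × ℝ) :
    VBracket (yAffineField a e b c) (yAffineField a' e' b' c') p
      = (a' p.2.2.1 * e p.2.2.1 - a p.2.2.1 * e' p.2.2.1, 0, 0,
          b' p.2.2.1 * e p.2.2.1 - b p.2.2.1 * e' p.2.2.1) := by
  rw [VBracket, fderiv_yAffineField_apply ha he hb hc _ _ rfl,
    fderiv_yAffineField_apply ha' he' hb' hc' _ _ rfl]
  simp [yAffineField]

end yAffineField

lemma Yfield_eq_yAffineField (ε : ℝ) (b₁ b₀ c₂ c₁ η : ℝ → ℝ) :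
    Yfield ε b₁ b₀ c₂ c₁ η = yAffineField (fun t => ε / 2 * (b₁ t * η t - deriv η t)) η
      (fun t => -2 * c₂ t * η t
        + ε / 2 * (deriv b₁ t * η t + b₁ t ^ 2 * η t - deriv (deriv η) t))
      (fun t => -c₁ t * η t + ε / 2 * b₀ t * (b₁ t * η t - deriv η t)) := by
  funext p
  simp only [Yfield, yAffineField, Prod.mk.injEq, true_and]
  ring

lemma hasDerivAt_wronskian {f g : ℝ → ℝ} {t : ℝ} (hf : DifferentiableAt ℝ f t)
    (hg : DifferentiableAt ℝ g t) (hf' : DifferentiableAt ℝ (deriv f) t)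
    (hg' : DifferentiableAt ℝ (deriv g) t) :
    HasDerivAt (fun s => f s * deriv g s - deriv f s * g s)
      (f t * deriv (deriv g) t - deriv (deriv f) t * g t) t :=
  ((hf.hasDerivAt.mul hg'.hasDerivAt).sub (hf'.hasDerivAt.mul hg.hasDerivAt)).congr_deriv
    (by ring)

lemma vBracket_Yfield (ε : ℝ) {b₁ b₀ c₂ c₁ η₁ η₂ : ℝ → ℝ} (hb₁ : ContDiff ℝ 2 b₁)
    (hb₀ : Differentiable ℝ b₀) (hc₂ : Differentiable ℝ c₂) (hc₁ : Differentiable ℝ c₁)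
    (hη₁ : ContDiff ℝ 3 η₁) (hη₂ : ContDiff ℝ 3 η₂) :
    VBracket (Yfield ε b₁ b₀ c₂ c₁ η₁) (Yfield ε b₁ b₀ c₂ c₁ η₂)
      = Xfield (fun t => -(ε / 2) * (η₁ t * deriv η₂ t - deriv η₁ t * η₂ t)) := by
  have hb₁d := hb₁.differentiable (by norm_num)
  have hb₁d' := hb₁.differentiable_deriv_two
  have hη₁d := hη₁.differentiable (by norm_num)
  have hη₁d' := (hη₁.of_le (by norm_num)).differentiable_deriv_two
  have hη₁d'' := hη₁.deriv'.differentiable_deriv_two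
  have hη₂d := hη₂.differentiable (by norm_num)
  have hη₂d' := (hη₂.of_le (by norm_num)).differentiable_deriv_two
  have hη₂d'' := hη₂.deriv'.differentiable_deriv_two
  funext p
  rw [Yfield_eq_yAffineField, Yfield_eq_yAffineField, vBracket_yAffineField (by fun_prop)
    (by fun_prop) (by fun_prop) (by fun_prop) (by fun_prop) (by fun_prop) (by fun_prop)
    (by fun_prop)]
  simp only [Xfield]
  rw [((hasDerivAt_wronskian (hη₁d _) (hη₂d _) (hη₁d' _) (hη₂d' _)).const_mul _).deriv]
  simp only [Prod.mk.injEq, true_and]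
  constructor <;> ring

theorem stmt2_general (ε : ℝ)
    (b₁ b₀ c₂ c₁ : ℝ → ℝ)
    (hb₁ : ContDiff ℝ (⊤ : ℕ∞) b₁) (hb₀ : ContDiff ℝ (⊤ : ℕ∞) b₀)
    (hc₂ : ContDiff ℝ (⊤ : ℕ∞) c₂) (hc₁ : ContDiff ℝ (⊤ : ℕ∞) c₁)
    (η₁ η₂ : ℝ → ℝ)
    (hη₁ : ContDiff ℝ (⊤ : ℕ∞) η₁) (hη₂ : ContDiff ℝ (⊤ : ℕ∞) η₂) :
    VBracket (Yfield ε b₁ b₀ c₂ c₁ η₁) (Yfield ε b₁ b₀ c₂ c₁ η₂)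
      = Xfield (fun t => -(ε / 2) * (η₁ t * deriv η₂ t - deriv η₁ t * η₂ t)) :=
  vBracket_Yfield ε (hb₁.of_le (by norm_cast)) (hb₀.differentiable (by simp))
    (hc₂.differentiable (by simp)) (hc₁.differentiable (by simp)) (hη₁.of_le (by norm_cast))
    (hη₂.of_le (by norm_cast))

theorem stmt2 (ε : ℝ) (hε : ε = 1 ∨ ε = -1)
    (b₁ b₀ c₂ c₁ : ℝ → ℝ)
    (hb₁ : ContDiff ℝ (⊤ : ℕ∞) b₁) (hb₀ : ContDiff ℝ (⊤ : ℕ∞) b₀)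
    (hc₂ : ContDiff ℝ (⊤ : ℕ∞) c₂) (hc₁ : ContDiff ℝ (⊤ : ℕ∞) c₁)
    (η₁ η₂ : ℝ → ℝ)
    (hη₁ : ContDiff ℝ (⊤ : ℕ∞) η₁) (hη₂ : ContDiff ℝ (⊤ : ℕ∞) η₂) :
    VBracket (Yfield ε b₁ b₀ c₂ c₁ η₁) (Yfield ε b₁ b₀ c₂ c₁ η₂)
      = Xfield (fun t => -(ε / 2) * (η₁ t * deriv η₂ t - deriv η₁ t * η₂ t)) :=
  stmt2_general ε b₁ b₀ c₂ c₁ hb₁ hb₀ hc₂ hc₁ η₁ η₂ hη₁ hη₂
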